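/- For all integers k ≥ 1 and n ≥ 2, γ_{[k]R}(C_8 □ P_n) ≤ 2n(k+1) − (⌊(n−2)/5⌋ + ⌊n/5⌋) + 2k. -/
import Mathlib

open scoped Classical

/-- The cylindrical grid `C_m □ P_n`: the Cartesian (box) product of the
cycle on `m` vertices with the path on `n` vertices. -/
def cylinder (m n : ℕ) : SimpleGraph (Fin m × Fin n) :=
  (SimpleGraph.cycleGraph m).boxProd (SimpleGraph.pathGraph n)

/-- Sum of `f` over the closed neighborhood of `v`. -/
noncomputable def nbhdSum {V : Type*} [Fintype V] (G : SimpleGraph V) (f : V → ℕ) (v : V) : ℕ :=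
  ∑ u ∈ Finset.univ.filter (fun u => G.Adj v u ∨ u = v), f u

/-- The number of active neighbors of `v`, i.e. neighbors with positive label. -/
noncomputable def anCard {V : Type*} [Fintype V] (G : SimpleGraph V) (f : V → ℕ) (v : V) : ℕ :=
  (Finset.univ.filter (fun u => G.Adj v u ∧ 0 < f u)).card

/-- `f : V → {0,…,k+1}` is a `[k]`-Roman dominating function on `G`. -/
def IsKRDF {V : Type*} [Fintype V] (k : ℕ) (G : SimpleGraph V) (f : V → ℕ) : Prop :=
  (∀ v, f v ≤ k + 1) ∧ ∀ v, f v < k → k + anCard G f v ≤ nbhdSum G f v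

/-- The `[k]`-Roman domination number: the minimum weight of a `[k]`-RDF. -/
noncomputable def gammaKR {V : Type*} [Fintype V] (k : ℕ) (G : SimpleGraph V) : ℕ :=
  sInf {w | ∃ f : V → ℕ, IsKRDF k G f ∧ w = ∑ v, f v}

def inA (n r j : ℕ) : Prop :=
  (j = 0 ∧ (r = 3 ∨ r = 7)) ∨
  (j = 1 ∧ (r = 1 ∨ r = 5)) ∨
  (2 ≤ j ∧ ((j % 5 = 0 ∧ (r = 0 ∨ r = 3)) ∨ (j % 5 = 1 ∧ r = 5) ∨
    (j % 5 = 2 ∧ (r = 2 ∨ r = 7)) ∨ (j % 5 = 3 ∧ (r = 1 ∨ r = 4)) ∨ (j % 5 = 4 ∧ r = 6)))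

def inB (n r j : ℕ) : Prop :=
  (j = n - 1 ∧ ((n % 5 = 0 ∧ (r = 0 ∨ r = 2 ∨ r = 3)) ∨ (n % 5 = 1 ∧ r = 5) ∨
    (n % 5 = 2 ∧ ((r = 1 ∧ j ≠ 1) ∨ r = 2 ∨ r = 7)) ∨ (n % 5 = 3 ∧ r = 4) ∨ (n % 5 = 4 ∧ r = 6))) ∨
  (j ≠ n - 1 ∧ ((j % 5 = 1 ∧ j ≠ 1 ∧ r = 1) ∨ (j % 5 = 4 ∧ r = 2)))

set_option maxHeartbeats 4000000 in
lemma dom (n r j : ℕ) (hn : 2 ≤ n) (hr : r < 8) (hj : j < n)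
    (hA : ¬ inA n r j) (hB : ¬ inB n r j) :
    inA n ((r+1)%8) j ∨ inA n ((r+7)%8) j ∨ (j+1 < n ∧ inA n r (j+1)) ∨ (1 ≤ j ∧ inA n r (j-1)) := by
  rcases (by omega : j = 0 ∨ (j = 1 ∧ n = 2) ∨ (j = 1 ∧ 3 ≤ n) ∨ (2 ≤ j ∧ j % 5 = 0) ∨ (2 ≤ j ∧ j % 5 = 1) ∨ (2 ≤ j ∧ j % 5 = 2) ∨ (2 ≤ j ∧ j % 5 = 3) ∨ (2 ≤ j ∧ j % 5 = 4)) with hc | ⟨hc, hn2⟩ | ⟨hc, hn3⟩ | ⟨h2, h5⟩ | ⟨h2, h5⟩ | ⟨h2, h5⟩ | ⟨h2, h5⟩ | ⟨h2, h5⟩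
  · subst hc
    interval_cases r
    · exact Or.inr (Or.inl (by clear hA hB; unfold inA; omega))
    · exact Or.inr (Or.inr (Or.inl ⟨by clear hA hB; omega, by clear hA hB; unfold inA; omega⟩))
    · exact Or.inl (by clear hA hB; unfold inA; omega)
    · exact absurd (show inA n 3 (0) by clear hA hB; unfold inA; omega) hA
    · exact Or.inr (Or.inl (by clear hA hB; unfold inA; omega))
    · exact Or.inr (Or.inr (Or.inl ⟨by clear hA hB; omega, by clear hA hB; unfold inA; omega⟩))
    · exact Or.inl (by clear hA hB; unfold inA; omega)
    · exact absurd (show inA n 7 (0) by clear hA hB; unfold inA; omega) hA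
  · subst hc
    have hn2' : n = 2 := by omega
    interval_cases r
    · exact Or.inl (by clear hA hB; unfold inA; omega)
    · exact absurd (show inA n 1 (1) by clear hA hB; unfold inA; omega) hA
    · exact absurd (show inB n 2 (1) by clear hA hB; unfold inB; omega) hB
    · refine Or.inr (Or.inr (Or.inr ⟨by clear hA hB; omega, ?_⟩))
      clear hA hB
      rw [show (1) - 1 = 0 by omega]
      unfold inA; omega
    · exact Or.inl (by clear hA hB; unfold inA; omega)
    · exact absurd (show inA n 5 (1) by clear hA hB; unfold inA; omega) hA
    · exact Or.inr (Or.inl (by clear hA hB; unfold inA; omega))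
    · exact absurd (show inB n 7 (1) by clear hA hB; unfold inB; omega) hB
  · subst hc
    interval_cases r
    · exact Or.inl (by clear hA hB; unfold inA; omega)
    · exact absurd (show inA n 1 (1) by clear hA hB; unfold inA; omega) hA
    · exact Or.inr (Or.inl (by clear hA hB; unfold inA; omega))
    · refine Or.inr (Or.inr (Or.inr ⟨by clear hA hB; omega, ?_⟩))
      clear hA hB
      rw [show (1) - 1 = 0 by omega]
      unfold inA; omega
    · exact Or.inl (by clear hA hB; unfold inA; omega)
    · exact absurd (show inA n 5 (1) by clear hA hB; unfold inA; omega) hA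
    · exact Or.inr (Or.inl (by clear hA hB; unfold inA; omega))
    · exact Or.inr (Or.inr (Or.inl ⟨by clear hA hB; omega, by clear hA hB; unfold inA; omega⟩))
  · obtain ⟨q, rfl⟩ : ∃ q, j = 5*q+5 := ⟨(j-5)/5, by omega⟩
    by_cases hl : 5*q+5 = n - 1
    · have hn' : n = 5*q+5+1 := by omega
      interval_cases r
      · exact absurd (show inA n 0 (5*q+5) by clear hA hB; unfold inA; omega) hA
      · exact Or.inr (Or.inl (by clear hA hB; unfold inA; omega))
      · exact Or.inl (by clear hA hB; unfold inA; omega)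
      · exact absurd (show inA n 3 (5*q+5) by clear hA hB; unfold inA; omega) hA
      · exact Or.inr (Or.inl (by clear hA hB; unfold inA; omega))
      · exact absurd (show inB n 5 (5*q+5) by clear hA hB; unfold inB; omega) hB
      · refine Or.inr (Or.inr (Or.inr ⟨by clear hA hB; omega, ?_⟩))
        clear hA hB
        rw [show (5*q+5) - 1 = 5*q+4 by omega]
        unfold inA; omega
      · exact Or.inl (by clear hA hB; unfold inA; omega)
    · interval_cases r
      · exact absurd (show inA n 0 (5*q+5) by clear hA hB; unfold inA; omega) hA
      · exact Or.inr (Or.inl (by clear hA hB; unfold inA; omega))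
      · exact Or.inl (by clear hA hB; unfold inA; omega)
      · exact absurd (show inA n 3 (5*q+5) by clear hA hB; unfold inA; omega) hA
      · exact Or.inr (Or.inl (by clear hA hB; unfold inA; omega))
      · exact Or.inr (Or.inr (Or.inl ⟨by clear hA hB; omega, by clear hA hB; unfold inA; omega⟩))
      · refine Or.inr (Or.inr (Or.inr ⟨by clear hA hB; omega, ?_⟩))
        clear hA hB
        rw [show (5*q+5) - 1 = 5*q+4 by omega]
        unfold inA; omega
      · exact Or.inl (by clear hA hB; unfold inA; omega)
  · obtain ⟨q, rfl⟩ : ∃ q, j = 5*q+6 := ⟨(j-6)/5, by omega⟩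
    by_cases hl : 5*q+6 = n - 1
    · have hn' : n = 5*q+6+1 := by omega
      interval_cases r
      · refine Or.inr (Or.inr (Or.inr ⟨by clear hA hB; omega, ?_⟩))
        clear hA hB
        rw [show (5*q+6) - 1 = 5*q+5 by omega]
        unfold inA; omega
      · exact absurd (show inB n 1 (5*q+6) by clear hA hB; unfold inB; omega) hB
      · exact absurd (show inB n 2 (5*q+6) by clear hA hB; unfold inB; omega) hB
      · refine Or.inr (Or.inr (Or.inr ⟨by clear hA hB; omega, ?_⟩))
        clear hA hB
        rw [show (5*q+6) - 1 = 5*q+5 by omega]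
        unfold inA; omega
      · exact Or.inl (by clear hA hB; unfold inA; omega)
      · exact absurd (show inA n 5 (5*q+6) by clear hA hB; unfold inA; omega) hA
      · exact Or.inr (Or.inl (by clear hA hB; unfold inA; omega))
      · exact absurd (show inB n 7 (5*q+6) by clear hA hB; unfold inB; omega) hB
    · interval_cases r
      · refine Or.inr (Or.inr (Or.inr ⟨by clear hA hB; omega, ?_⟩))
        clear hA hB
        rw [show (5*q+6) - 1 = 5*q+5 by omega]
        unfold inA; omega
      · exact absurd (show inB n 1 (5*q+6) by clear hA hB; unfold inB; omega) hB
      · exact Or.inr (Or.inr (Or.inl ⟨by clear hA hB; omega, by clear hA hB; unfold inA; omega⟩))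
      · refine Or.inr (Or.inr (Or.inr ⟨by clear hA hB; omega, ?_⟩))
        clear hA hB
        rw [show (5*q+6) - 1 = 5*q+5 by omega]
        unfold inA; omega
      · exact Or.inl (by clear hA hB; unfold inA; omega)
      · exact absurd (show inA n 5 (5*q+6) by clear hA hB; unfold inA; omega) hA
      · exact Or.inr (Or.inl (by clear hA hB; unfold inA; omega))
      · exact Or.inr (Or.inr (Or.inl ⟨by clear hA hB; omega, by clear hA hB; unfold inA; omega⟩))
  · obtain ⟨q, rfl⟩ : ∃ q, j = 5*q+2 := ⟨(j-2)/5, by omega⟩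
    by_cases hl : 5*q+2 = n - 1
    · have hn' : n = 5*q+2+1 := by omega
      interval_cases r
      · exact Or.inr (Or.inl (by clear hA hB; unfold inA; omega))
      · exact Or.inl (by clear hA hB; unfold inA; omega)
      · exact absurd (show inA n 2 (5*q+2) by clear hA hB; unfold inA; omega) hA
      · exact Or.inr (Or.inl (by clear hA hB; unfold inA; omega))
      · exact absurd (show inB n 4 (5*q+2) by clear hA hB; unfold inB; omega) hB
      · refine Or.inr (Or.inr (Or.inr ⟨by clear hA hB; omega, ?_⟩))
        clear hA hB
        rw [show (5*q+2) - 1 = 5*q+1 by omega]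
        unfold inA; omega
      · exact Or.inl (by clear hA hB; unfold inA; omega)
      · exact absurd (show inA n 7 (5*q+2) by clear hA hB; unfold inA; omega) hA
    · interval_cases r
      · exact Or.inr (Or.inl (by clear hA hB; unfold inA; omega))
      · exact Or.inl (by clear hA hB; unfold inA; omega)
      · exact absurd (show inA n 2 (5*q+2) by clear hA hB; unfold inA; omega) hA
      · exact Or.inr (Or.inl (by clear hA hB; unfold inA; omega))
      · exact Or.inr (Or.inr (Or.inl ⟨by clear hA hB; omega, by clear hA hB; unfold inA; omega⟩))
      · refine Or.inr (Or.inr (Or.inr ⟨by clear hA hB; omega, ?_⟩))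
        clear hA hB
        rw [show (5*q+2) - 1 = 5*q+1 by omega]
        unfold inA; omega
      · exact Or.inl (by clear hA hB; unfold inA; omega)
      · exact absurd (show inA n 7 (5*q+2) by clear hA hB; unfold inA; omega) hA
  · obtain ⟨q, rfl⟩ : ∃ q, j = 5*q+3 := ⟨(j-3)/5, by omega⟩
    by_cases hl : 5*q+3 = n - 1
    · have hn' : n = 5*q+3+1 := by omega
      interval_cases r
      · exact Or.inl (by clear hA hB; unfold inA; omega)
      · exact absurd (show inA n 1 (5*q+3) by clear hA hB; unfold inA; omega) hA
      · exact Or.inr (Or.inl (by clear hA hB; unfold inA; omega))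
      · exact Or.inl (by clear hA hB; unfold inA; omega)
      · exact absurd (show inA n 4 (5*q+3) by clear hA hB; unfold inA; omega) hA
      · exact Or.inr (Or.inl (by clear hA hB; unfold inA; omega))
      · exact absurd (show inB n 6 (5*q+3) by clear hA hB; unfold inB; omega) hB
      · refine Or.inr (Or.inr (Or.inr ⟨by clear hA hB; omega, ?_⟩))
        clear hA hB
        rw [show (5*q+3) - 1 = 5*q+2 by omega]
        unfold inA; omega
    · interval_cases r
      · exact Or.inl (by clear hA hB; unfold inA; omega)
      · exact absurd (show inA n 1 (5*q+3) by clear hA hB; unfold inA; omega) hA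
      · exact Or.inr (Or.inl (by clear hA hB; unfold inA; omega))
      · exact Or.inl (by clear hA hB; unfold inA; omega)
      · exact absurd (show inA n 4 (5*q+3) by clear hA hB; unfold inA; omega) hA
      · exact Or.inr (Or.inl (by clear hA hB; unfold inA; omega))
      · exact Or.inr (Or.inr (Or.inl ⟨by clear hA hB; omega, by clear hA hB; unfold inA; omega⟩))
      · refine Or.inr (Or.inr (Or.inr ⟨by clear hA hB; omega, ?_⟩))
        clear hA hB
        rw [show (5*q+3) - 1 = 5*q+2 by omega]
        unfold inA; omega
  · obtain ⟨q, rfl⟩ : ∃ q, j = 5*q+4 := ⟨(j-4)/5, by omega⟩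
    by_cases hl : 5*q+4 = n - 1
    · have hn' : n = 5*q+4+1 := by omega
      interval_cases r
      · exact absurd (show inB n 0 (5*q+4) by clear hA hB; unfold inB; omega) hB
      · refine Or.inr (Or.inr (Or.inr ⟨by clear hA hB; omega, ?_⟩))
        clear hA hB
        rw [show (5*q+4) - 1 = 5*q+3 by omega]
        unfold inA; omega
      · exact absurd (show inB n 2 (5*q+4) by clear hA hB; unfold inB; omega) hB
      · exact absurd (show inB n 3 (5*q+4) by clear hA hB; unfold inB; omega) hB
      · refine Or.inr (Or.inr (Or.inr ⟨by clear hA hB; omega, ?_⟩))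
        clear hA hB
        rw [show (5*q+4) - 1 = 5*q+3 by omega]
        unfold inA; omega
      · exact Or.inl (by clear hA hB; unfold inA; omega)
      · exact absurd (show inA n 6 (5*q+4) by clear hA hB; unfold inA; omega) hA
      · exact Or.inr (Or.inl (by clear hA hB; unfold inA; omega))
    · interval_cases r
      · exact Or.inr (Or.inr (Or.inl ⟨by clear hA hB; omega, by clear hA hB; unfold inA; omega⟩))
      · refine Or.inr (Or.inr (Or.inr ⟨by clear hA hB; omega, ?_⟩))
        clear hA hB
        rw [show (5*q+4) - 1 = 5*q+3 by omega]
        unfold inA; omega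
      · exact absurd (show inB n 2 (5*q+4) by clear hA hB; unfold inB; omega) hB
      · exact Or.inr (Or.inr (Or.inl ⟨by clear hA hB; omega, by clear hA hB; unfold inA; omega⟩))
      · refine Or.inr (Or.inr (Or.inr ⟨by clear hA hB; omega, ?_⟩))
        clear hA hB
        rw [show (5*q+4) - 1 = 5*q+3 by omega]
        unfold inA; omega
      · exact Or.inl (by clear hA hB; unfold inA; omega)
      · exact absurd (show inA n 6 (5*q+4) by clear hA hB; unfold inA; omega) hA
      · exact Or.inr (Or.inl (by clear hA hB; unfold inA; omega))

noncomputable def fcel (k n r j : ℕ) : ℕ := if inA n r j then k+1 else if inB n r j then k else 0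

noncomputable def col (k n j : ℕ) : ℕ := ∑ r ∈ Finset.range 8, fcel k n r j

def CI (k j : ℕ) : ℕ := if 2 ≤ j ∧ (j % 5 = 1 ∨ j % 5 = 4) then 2*k+1 else 2*k+2

def CL (k n : ℕ) : ℕ := if n = 2 then 4*k+2 else if n % 5 = 0 ∨ n % 5 = 2 then 4*k+1 else 3*k+2

lemma col_expand (k n j : ℕ) : col k n j =
    fcel k n 0 j + fcel k n 1 j + fcel k n 2 j + fcel k n 3 j + fcel k n 4 j +
    fcel k n 5 j + fcel k n 6 j + fcel k n 7 j := by
  unfold col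
  rw [Finset.sum_range_succ, Finset.sum_range_succ, Finset.sum_range_succ, Finset.sum_range_succ,
    Finset.sum_range_succ, Finset.sum_range_succ, Finset.sum_range_succ, Finset.sum_range_succ,
    Finset.sum_range_zero]
  omega

lemma col_interior (k n j : ℕ) (hn : 2 ≤ n) (hj : j < n - 1) : col k n j = CI k j := by
  have hl : j ≠ n - 1 := by omega
  rcases (by omega : j = 0 ∨ j = 1 ∨ (2 ≤ j ∧ j % 5 = 0) ∨ (2 ≤ j ∧ j % 5 = 1) ∨ (2 ≤ j ∧ j % 5 = 2) ∨ (2 ≤ j ∧ j % 5 = 3) ∨ (2 ≤ j ∧ j % 5 = 4)) with hc | hc | ⟨h2, h5⟩ | ⟨h2, h5⟩ | ⟨h2, h5⟩ | ⟨h2, h5⟩ | ⟨h2, h5⟩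
  · subst hc
    rw [col_expand]
    rw [show fcel k n 0 (0) = 0 from by unfold fcel; rw [if_neg (show ¬ inA n 0 (0) by unfold inA; omega), if_neg (show ¬ inB n 0 (0) by unfold inB; omega)],
      show fcel k n 1 (0) = 0 from by unfold fcel; rw [if_neg (show ¬ inA n 1 (0) by unfold inA; omega), if_neg (show ¬ inB n 1 (0) by unfold inB; omega)],
      show fcel k n 2 (0) = 0 from by unfold fcel; rw [if_neg (show ¬ inA n 2 (0) by unfold inA; omega), if_neg (show ¬ inB n 2 (0) by unfold inB; omega)],
      show fcel k n 3 (0) = k+1 from by unfold fcel; rw [if_pos (show inA n 3 (0) by unfold inA; omega)],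
      show fcel k n 4 (0) = 0 from by unfold fcel; rw [if_neg (show ¬ inA n 4 (0) by unfold inA; omega), if_neg (show ¬ inB n 4 (0) by unfold inB; omega)],
      show fcel k n 5 (0) = 0 from by unfold fcel; rw [if_neg (show ¬ inA n 5 (0) by unfold inA; omega), if_neg (show ¬ inB n 5 (0) by unfold inB; omega)],
      show fcel k n 6 (0) = 0 from by unfold fcel; rw [if_neg (show ¬ inA n 6 (0) by unfold inA; omega), if_neg (show ¬ inB n 6 (0) by unfold inB; omega)],
      show fcel k n 7 (0) = k+1 from by unfold fcel; rw [if_pos (show inA n 7 (0) by unfold inA; omega)]]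
    unfold CI
    rw [if_neg (by omega)]
    omega
  · subst hc
    rw [col_expand]
    rw [show fcel k n 0 (1) = 0 from by unfold fcel; rw [if_neg (show ¬ inA n 0 (1) by unfold inA; omega), if_neg (show ¬ inB n 0 (1) by unfold inB; omega)],
      show fcel k n 1 (1) = k+1 from by unfold fcel; rw [if_pos (show inA n 1 (1) by unfold inA; omega)],
      show fcel k n 2 (1) = 0 from by unfold fcel; rw [if_neg (show ¬ inA n 2 (1) by unfold inA; omega), if_neg (show ¬ inB n 2 (1) by unfold inB; omega)],
      show fcel k n 3 (1) = 0 from by unfold fcel; rw [if_neg (show ¬ inA n 3 (1) by unfold inA; omega), if_neg (show ¬ inB n 3 (1) by unfold inB; omega)],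
      show fcel k n 4 (1) = 0 from by unfold fcel; rw [if_neg (show ¬ inA n 4 (1) by unfold inA; omega), if_neg (show ¬ inB n 4 (1) by unfold inB; omega)],
      show fcel k n 5 (1) = k+1 from by unfold fcel; rw [if_pos (show inA n 5 (1) by unfold inA; omega)],
      show fcel k n 6 (1) = 0 from by unfold fcel; rw [if_neg (show ¬ inA n 6 (1) by unfold inA; omega), if_neg (show ¬ inB n 6 (1) by unfold inB; omega)],
      show fcel k n 7 (1) = 0 from by unfold fcel; rw [if_neg (show ¬ inA n 7 (1) by unfold inA; omega), if_neg (show ¬ inB n 7 (1) by unfold inB; omega)]]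
    unfold CI
    rw [if_neg (by omega)]
    omega
  · obtain ⟨q, rfl⟩ : ∃ q, j = 5*q+5 := ⟨(j-5)/5, by omega⟩
    rw [col_expand]
    rw [show fcel k n 0 (5*q+5) = k+1 from by unfold fcel; rw [if_pos (show inA n 0 (5*q+5) by unfold inA; omega)],
      show fcel k n 1 (5*q+5) = 0 from by unfold fcel; rw [if_neg (show ¬ inA n 1 (5*q+5) by unfold inA; omega), if_neg (show ¬ inB n 1 (5*q+5) by unfold inB; omega)],
      show fcel k n 2 (5*q+5) = 0 from by unfold fcel; rw [if_neg (show ¬ inA n 2 (5*q+5) by unfold inA; omega), if_neg (show ¬ inB n 2 (5*q+5) by unfold inB; omega)],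
      show fcel k n 3 (5*q+5) = k+1 from by unfold fcel; rw [if_pos (show inA n 3 (5*q+5) by unfold inA; omega)],
      show fcel k n 4 (5*q+5) = 0 from by unfold fcel; rw [if_neg (show ¬ inA n 4 (5*q+5) by unfold inA; omega), if_neg (show ¬ inB n 4 (5*q+5) by unfold inB; omega)],
      show fcel k n 5 (5*q+5) = 0 from by unfold fcel; rw [if_neg (show ¬ inA n 5 (5*q+5) by unfold inA; omega), if_neg (show ¬ inB n 5 (5*q+5) by unfold inB; omega)],
      show fcel k n 6 (5*q+5) = 0 from by unfold fcel; rw [if_neg (show ¬ inA n 6 (5*q+5) by unfold inA; omega), if_neg (show ¬ inB n 6 (5*q+5) by unfold inB; omega)],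
      show fcel k n 7 (5*q+5) = 0 from by unfold fcel; rw [if_neg (show ¬ inA n 7 (5*q+5) by unfold inA; omega), if_neg (show ¬ inB n 7 (5*q+5) by unfold inB; omega)]]
    unfold CI
    rw [if_neg (by omega)]
    omega
  · obtain ⟨q, rfl⟩ : ∃ q, j = 5*q+6 := ⟨(j-6)/5, by omega⟩
    rw [col_expand]
    rw [show fcel k n 0 (5*q+6) = 0 from by unfold fcel; rw [if_neg (show ¬ inA n 0 (5*q+6) by unfold inA; omega), if_neg (show ¬ inB n 0 (5*q+6) by unfold inB; omega)],
      show fcel k n 1 (5*q+6) = k from by unfold fcel; rw [if_neg (show ¬ inA n 1 (5*q+6) by unfold inA; omega), if_pos (show inB n 1 (5*q+6) by unfold inB; omega)],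
      show fcel k n 2 (5*q+6) = 0 from by unfold fcel; rw [if_neg (show ¬ inA n 2 (5*q+6) by unfold inA; omega), if_neg (show ¬ inB n 2 (5*q+6) by unfold inB; omega)],
      show fcel k n 3 (5*q+6) = 0 from by unfold fcel; rw [if_neg (show ¬ inA n 3 (5*q+6) by unfold inA; omega), if_neg (show ¬ inB n 3 (5*q+6) by unfold inB; omega)],
      show fcel k n 4 (5*q+6) = 0 from by unfold fcel; rw [if_neg (show ¬ inA n 4 (5*q+6) by unfold inA; omega), if_neg (show ¬ inB n 4 (5*q+6) by unfold inB; omega)],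
      show fcel k n 5 (5*q+6) = k+1 from by unfold fcel; rw [if_pos (show inA n 5 (5*q+6) by unfold inA; omega)],
      show fcel k n 6 (5*q+6) = 0 from by unfold fcel; rw [if_neg (show ¬ inA n 6 (5*q+6) by unfold inA; omega), if_neg (show ¬ inB n 6 (5*q+6) by unfold inB; omega)],
      show fcel k n 7 (5*q+6) = 0 from by unfold fcel; rw [if_neg (show ¬ inA n 7 (5*q+6) by unfold inA; omega), if_neg (show ¬ inB n 7 (5*q+6) by unfold inB; omega)]]
    unfold CI
    rw [if_pos (by omega)]
    omega
  · obtain ⟨q, rfl⟩ : ∃ q, j = 5*q+2 := ⟨(j-2)/5, by omega⟩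
    rw [col_expand]
    rw [show fcel k n 0 (5*q+2) = 0 from by unfold fcel; rw [if_neg (show ¬ inA n 0 (5*q+2) by unfold inA; omega), if_neg (show ¬ inB n 0 (5*q+2) by unfold inB; omega)],
      show fcel k n 1 (5*q+2) = 0 from by unfold fcel; rw [if_neg (show ¬ inA n 1 (5*q+2) by unfold inA; omega), if_neg (show ¬ inB n 1 (5*q+2) by unfold inB; omega)],
      show fcel k n 2 (5*q+2) = k+1 from by unfold fcel; rw [if_pos (show inA n 2 (5*q+2) by unfold inA; omega)],
      show fcel k n 3 (5*q+2) = 0 from by unfold fcel; rw [if_neg (show ¬ inA n 3 (5*q+2) by unfold inA; omega), if_neg (show ¬ inB n 3 (5*q+2) by unfold inB; omega)],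
      show fcel k n 4 (5*q+2) = 0 from by unfold fcel; rw [if_neg (show ¬ inA n 4 (5*q+2) by unfold inA; omega), if_neg (show ¬ inB n 4 (5*q+2) by unfold inB; omega)],
      show fcel k n 5 (5*q+2) = 0 from by unfold fcel; rw [if_neg (show ¬ inA n 5 (5*q+2) by unfold inA; omega), if_neg (show ¬ inB n 5 (5*q+2) by unfold inB; omega)],
      show fcel k n 6 (5*q+2) = 0 from by unfold fcel; rw [if_neg (show ¬ inA n 6 (5*q+2) by unfold inA; omega), if_neg (show ¬ inB n 6 (5*q+2) by unfold inB; omega)],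
      show fcel k n 7 (5*q+2) = k+1 from by unfold fcel; rw [if_pos (show inA n 7 (5*q+2) by unfold inA; omega)]]
    unfold CI
    rw [if_neg (by omega)]
    omega
  · obtain ⟨q, rfl⟩ : ∃ q, j = 5*q+3 := ⟨(j-3)/5, by omega⟩
    rw [col_expand]
    rw [show fcel k n 0 (5*q+3) = 0 from by unfold fcel; rw [if_neg (show ¬ inA n 0 (5*q+3) by unfold inA; omega), if_neg (show ¬ inB n 0 (5*q+3) by unfold inB; omega)],
      show fcel k n 1 (5*q+3) = k+1 from by unfold fcel; rw [if_pos (show inA n 1 (5*q+3) by unfold inA; omega)],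
      show fcel k n 2 (5*q+3) = 0 from by unfold fcel; rw [if_neg (show ¬ inA n 2 (5*q+3) by unfold inA; omega), if_neg (show ¬ inB n 2 (5*q+3) by unfold inB; omega)],
      show fcel k n 3 (5*q+3) = 0 from by unfold fcel; rw [if_neg (show ¬ inA n 3 (5*q+3) by unfold inA; omega), if_neg (show ¬ inB n 3 (5*q+3) by unfold inB; omega)],
      show fcel k n 4 (5*q+3) = k+1 from by unfold fcel; rw [if_pos (show inA n 4 (5*q+3) by unfold inA; omega)],
      show fcel k n 5 (5*q+3) = 0 from by unfold fcel; rw [if_neg (show ¬ inA n 5 (5*q+3) by unfold inA; omega), if_neg (show ¬ inB n 5 (5*q+3) by unfold inB; omega)],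
      show fcel k n 6 (5*q+3) = 0 from by unfold fcel; rw [if_neg (show ¬ inA n 6 (5*q+3) by unfold inA; omega), if_neg (show ¬ inB n 6 (5*q+3) by unfold inB; omega)],
      show fcel k n 7 (5*q+3) = 0 from by unfold fcel; rw [if_neg (show ¬ inA n 7 (5*q+3) by unfold inA; omega), if_neg (show ¬ inB n 7 (5*q+3) by unfold inB; omega)]]
    unfold CI
    rw [if_neg (by omega)]
    omega
  · obtain ⟨q, rfl⟩ : ∃ q, j = 5*q+4 := ⟨(j-4)/5, by omega⟩
    rw [col_expand]
    rw [show fcel k n 0 (5*q+4) = 0 from by unfold fcel; rw [if_neg (show ¬ inA n 0 (5*q+4) by unfold inA; omega), if_neg (show ¬ inB n 0 (5*q+4) by unfold inB; omega)],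
      show fcel k n 1 (5*q+4) = 0 from by unfold fcel; rw [if_neg (show ¬ inA n 1 (5*q+4) by unfold inA; omega), if_neg (show ¬ inB n 1 (5*q+4) by unfold inB; omega)],
      show fcel k n 2 (5*q+4) = k from by unfold fcel; rw [if_neg (show ¬ inA n 2 (5*q+4) by unfold inA; omega), if_pos (show inB n 2 (5*q+4) by unfold inB; omega)],
      show fcel k n 3 (5*q+4) = 0 from by unfold fcel; rw [if_neg (show ¬ inA n 3 (5*q+4) by unfold inA; omega), if_neg (show ¬ inB n 3 (5*q+4) by unfold inB; omega)],
      show fcel k n 4 (5*q+4) = 0 from by unfold fcel; rw [if_neg (show ¬ inA n 4 (5*q+4) by unfold inA; omega), if_neg (show ¬ inB n 4 (5*q+4) by unfold inB; omega)],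
      show fcel k n 5 (5*q+4) = 0 from by unfold fcel; rw [if_neg (show ¬ inA n 5 (5*q+4) by unfold inA; omega), if_neg (show ¬ inB n 5 (5*q+4) by unfold inB; omega)],
      show fcel k n 6 (5*q+4) = k+1 from by unfold fcel; rw [if_pos (show inA n 6 (5*q+4) by unfold inA; omega)],
      show fcel k n 7 (5*q+4) = 0 from by unfold fcel; rw [if_neg (show ¬ inA n 7 (5*q+4) by unfold inA; omega), if_neg (show ¬ inB n 7 (5*q+4) by unfold inB; omega)]]
    unfold CI
    rw [if_pos (by omega)]
    omega

lemma col_last (k n : ℕ) (hn : 2 ≤ n) : col k n (n-1) = CL k n := by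
  rcases (by omega : n = 2 ∨ (3 ≤ n ∧ n % 5 = 0) ∨ (3 ≤ n ∧ n % 5 = 1) ∨ (3 ≤ n ∧ n % 5 = 2) ∨ (3 ≤ n ∧ n % 5 = 3) ∨ (3 ≤ n ∧ n % 5 = 4)) with hc | ⟨h3, h5⟩ | ⟨h3, h5⟩ | ⟨h3, h5⟩ | ⟨h3, h5⟩ | ⟨h3, h5⟩
  · subst hc
    rw [show (2:ℕ)-1 = 1 by omega]
    rw [col_expand]
    rw [show fcel k 2 0 (1) = 0 from by unfold fcel; rw [if_neg (show ¬ inA 2 0 (1) by unfold inA; omega), if_neg (show ¬ inB 2 0 (1) by unfold inB; omega)],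
      show fcel k 2 1 (1) = k+1 from by unfold fcel; rw [if_pos (show inA 2 1 (1) by unfold inA; omega)],
      show fcel k 2 2 (1) = k from by unfold fcel; rw [if_neg (show ¬ inA 2 2 (1) by unfold inA; omega), if_pos (show inB 2 2 (1) by unfold inB; omega)],
      show fcel k 2 3 (1) = 0 from by unfold fcel; rw [if_neg (show ¬ inA 2 3 (1) by unfold inA; omega), if_neg (show ¬ inB 2 3 (1) by unfold inB; omega)],
      show fcel k 2 4 (1) = 0 from by unfold fcel; rw [if_neg (show ¬ inA 2 4 (1) by unfold inA; omega), if_neg (show ¬ inB 2 4 (1) by unfold inB; omega)],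
      show fcel k 2 5 (1) = k+1 from by unfold fcel; rw [if_pos (show inA 2 5 (1) by unfold inA; omega)],
      show fcel k 2 6 (1) = 0 from by unfold fcel; rw [if_neg (show ¬ inA 2 6 (1) by unfold inA; omega), if_neg (show ¬ inB 2 6 (1) by unfold inB; omega)],
      show fcel k 2 7 (1) = k from by unfold fcel; rw [if_neg (show ¬ inA 2 7 (1) by unfold inA; omega), if_pos (show inB 2 7 (1) by unfold inB; omega)]]
    unfold CL
    rw [if_pos rfl]
    omega
  · obtain ⟨q, rfl⟩ : ∃ q, n = 5*q+5 := ⟨(n-5)/5, by omega⟩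
    rw [show 5*q+5-1 = 5*q+4 by omega]
    rw [col_expand]
    rw [show fcel k (5*q+5) 0 (5*q+4) = k from by unfold fcel; rw [if_neg (show ¬ inA (5*q+5) 0 (5*q+4) by unfold inA; omega), if_pos (show inB (5*q+5) 0 (5*q+4) by unfold inB; omega)],
      show fcel k (5*q+5) 1 (5*q+4) = 0 from by unfold fcel; rw [if_neg (show ¬ inA (5*q+5) 1 (5*q+4) by unfold inA; omega), if_neg (show ¬ inB (5*q+5) 1 (5*q+4) by unfold inB; omega)],
      show fcel k (5*q+5) 2 (5*q+4) = k from by unfold fcel; rw [if_neg (show ¬ inA (5*q+5) 2 (5*q+4) by unfold inA; omega), if_pos (show inB (5*q+5) 2 (5*q+4) by unfold inB; omega)],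
      show fcel k (5*q+5) 3 (5*q+4) = k from by unfold fcel; rw [if_neg (show ¬ inA (5*q+5) 3 (5*q+4) by unfold inA; omega), if_pos (show inB (5*q+5) 3 (5*q+4) by unfold inB; omega)],
      show fcel k (5*q+5) 4 (5*q+4) = 0 from by unfold fcel; rw [if_neg (show ¬ inA (5*q+5) 4 (5*q+4) by unfold inA; omega), if_neg (show ¬ inB (5*q+5) 4 (5*q+4) by unfold inB; omega)],
      show fcel k (5*q+5) 5 (5*q+4) = 0 from by unfold fcel; rw [if_neg (show ¬ inA (5*q+5) 5 (5*q+4) by unfold inA; omega), if_neg (show ¬ inB (5*q+5) 5 (5*q+4) by unfold inB; omega)],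
      show fcel k (5*q+5) 6 (5*q+4) = k+1 from by unfold fcel; rw [if_pos (show inA (5*q+5) 6 (5*q+4) by unfold inA; omega)],
      show fcel k (5*q+5) 7 (5*q+4) = 0 from by unfold fcel; rw [if_neg (show ¬ inA (5*q+5) 7 (5*q+4) by unfold inA; omega), if_neg (show ¬ inB (5*q+5) 7 (5*q+4) by unfold inB; omega)]]
    unfold CL
    rw [if_neg (by omega), if_pos (by omega)]
    omega
  · obtain ⟨q, rfl⟩ : ∃ q, n = 5*q+6 := ⟨(n-6)/5, by omega⟩
    rw [show 5*q+6-1 = 5*q+5 by omega]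
    rw [col_expand]
    rw [show fcel k (5*q+6) 0 (5*q+5) = k+1 from by unfold fcel; rw [if_pos (show inA (5*q+6) 0 (5*q+5) by unfold inA; omega)],
      show fcel k (5*q+6) 1 (5*q+5) = 0 from by unfold fcel; rw [if_neg (show ¬ inA (5*q+6) 1 (5*q+5) by unfold inA; omega), if_neg (show ¬ inB (5*q+6) 1 (5*q+5) by unfold inB; omega)],
      show fcel k (5*q+6) 2 (5*q+5) = 0 from by unfold fcel; rw [if_neg (show ¬ inA (5*q+6) 2 (5*q+5) by unfold inA; omega), if_neg (show ¬ inB (5*q+6) 2 (5*q+5) by unfold inB; omega)],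
      show fcel k (5*q+6) 3 (5*q+5) = k+1 from by unfold fcel; rw [if_pos (show inA (5*q+6) 3 (5*q+5) by unfold inA; omega)],
      show fcel k (5*q+6) 4 (5*q+5) = 0 from by unfold fcel; rw [if_neg (show ¬ inA (5*q+6) 4 (5*q+5) by unfold inA; omega), if_neg (show ¬ inB (5*q+6) 4 (5*q+5) by unfold inB; omega)],
      show fcel k (5*q+6) 5 (5*q+5) = k from by unfold fcel; rw [if_neg (show ¬ inA (5*q+6) 5 (5*q+5) by unfold inA; omega), if_pos (show inB (5*q+6) 5 (5*q+5) by unfold inB; omega)],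
      show fcel k (5*q+6) 6 (5*q+5) = 0 from by unfold fcel; rw [if_neg (show ¬ inA (5*q+6) 6 (5*q+5) by unfold inA; omega), if_neg (show ¬ inB (5*q+6) 6 (5*q+5) by unfold inB; omega)],
      show fcel k (5*q+6) 7 (5*q+5) = 0 from by unfold fcel; rw [if_neg (show ¬ inA (5*q+6) 7 (5*q+5) by unfold inA; omega), if_neg (show ¬ inB (5*q+6) 7 (5*q+5) by unfold inB; omega)]]
    unfold CL
    rw [if_neg (by omega), if_neg (by omega)]
    omega
  · obtain ⟨q, rfl⟩ : ∃ q, n = 5*q+7 := ⟨(n-7)/5, by omega⟩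
    rw [show 5*q+7-1 = 5*q+6 by omega]
    rw [col_expand]
    rw [show fcel k (5*q+7) 0 (5*q+6) = 0 from by unfold fcel; rw [if_neg (show ¬ inA (5*q+7) 0 (5*q+6) by unfold inA; omega), if_neg (show ¬ inB (5*q+7) 0 (5*q+6) by unfold inB; omega)],
      show fcel k (5*q+7) 1 (5*q+6) = k from by unfold fcel; rw [if_neg (show ¬ inA (5*q+7) 1 (5*q+6) by unfold inA; omega), if_pos (show inB (5*q+7) 1 (5*q+6) by unfold inB; omega)],
      show fcel k (5*q+7) 2 (5*q+6) = k from by unfold fcel; rw [if_neg (show ¬ inA (5*q+7) 2 (5*q+6) by unfold inA; omega), if_pos (show inB (5*q+7) 2 (5*q+6) by unfold inB; omega)],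
      show fcel k (5*q+7) 3 (5*q+6) = 0 from by unfold fcel; rw [if_neg (show ¬ inA (5*q+7) 3 (5*q+6) by unfold inA; omega), if_neg (show ¬ inB (5*q+7) 3 (5*q+6) by unfold inB; omega)],
      show fcel k (5*q+7) 4 (5*q+6) = 0 from by unfold fcel; rw [if_neg (show ¬ inA (5*q+7) 4 (5*q+6) by unfold inA; omega), if_neg (show ¬ inB (5*q+7) 4 (5*q+6) by unfold inB; omega)],
      show fcel k (5*q+7) 5 (5*q+6) = k+1 from by unfold fcel; rw [if_pos (show inA (5*q+7) 5 (5*q+6) by unfold inA; omega)],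
      show fcel k (5*q+7) 6 (5*q+6) = 0 from by unfold fcel; rw [if_neg (show ¬ inA (5*q+7) 6 (5*q+6) by unfold inA; omega), if_neg (show ¬ inB (5*q+7) 6 (5*q+6) by unfold inB; omega)],
      show fcel k (5*q+7) 7 (5*q+6) = k from by unfold fcel; rw [if_neg (show ¬ inA (5*q+7) 7 (5*q+6) by unfold inA; omega), if_pos (show inB (5*q+7) 7 (5*q+6) by unfold inB; omega)]]
    unfold CL
    rw [if_neg (by omega), if_pos (by omega)]
    omega
  · obtain ⟨q, rfl⟩ : ∃ q, n = 5*q+3 := ⟨(n-3)/5, by omega⟩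
    rw [show 5*q+3-1 = 5*q+2 by omega]
    rw [col_expand]
    rw [show fcel k (5*q+3) 0 (5*q+2) = 0 from by unfold fcel; rw [if_neg (show ¬ inA (5*q+3) 0 (5*q+2) by unfold inA; omega), if_neg (show ¬ inB (5*q+3) 0 (5*q+2) by unfold inB; omega)],
      show fcel k (5*q+3) 1 (5*q+2) = 0 from by unfold fcel; rw [if_neg (show ¬ inA (5*q+3) 1 (5*q+2) by unfold inA; omega), if_neg (show ¬ inB (5*q+3) 1 (5*q+2) by unfold inB; omega)],
      show fcel k (5*q+3) 2 (5*q+2) = k+1 from by unfold fcel; rw [if_pos (show inA (5*q+3) 2 (5*q+2) by unfold inA; omega)],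
      show fcel k (5*q+3) 3 (5*q+2) = 0 from by unfold fcel; rw [if_neg (show ¬ inA (5*q+3) 3 (5*q+2) by unfold inA; omega), if_neg (show ¬ inB (5*q+3) 3 (5*q+2) by unfold inB; omega)],
      show fcel k (5*q+3) 4 (5*q+2) = k from by unfold fcel; rw [if_neg (show ¬ inA (5*q+3) 4 (5*q+2) by unfold inA; omega), if_pos (show inB (5*q+3) 4 (5*q+2) by unfold inB; omega)],
      show fcel k (5*q+3) 5 (5*q+2) = 0 from by unfold fcel; rw [if_neg (show ¬ inA (5*q+3) 5 (5*q+2) by unfold inA; omega), if_neg (show ¬ inB (5*q+3) 5 (5*q+2) by unfold inB; omega)],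
      show fcel k (5*q+3) 6 (5*q+2) = 0 from by unfold fcel; rw [if_neg (show ¬ inA (5*q+3) 6 (5*q+2) by unfold inA; omega), if_neg (show ¬ inB (5*q+3) 6 (5*q+2) by unfold inB; omega)],
      show fcel k (5*q+3) 7 (5*q+2) = k+1 from by unfold fcel; rw [if_pos (show inA (5*q+3) 7 (5*q+2) by unfold inA; omega)]]
    unfold CL
    rw [if_neg (by omega), if_neg (by omega)]
    omega
  · obtain ⟨q, rfl⟩ : ∃ q, n = 5*q+4 := ⟨(n-4)/5, by omega⟩
    rw [show 5*q+4-1 = 5*q+3 by omega]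
    rw [col_expand]
    rw [show fcel k (5*q+4) 0 (5*q+3) = 0 from by unfold fcel; rw [if_neg (show ¬ inA (5*q+4) 0 (5*q+3) by unfold inA; omega), if_neg (show ¬ inB (5*q+4) 0 (5*q+3) by unfold inB; omega)],
      show fcel k (5*q+4) 1 (5*q+3) = k+1 from by unfold fcel; rw [if_pos (show inA (5*q+4) 1 (5*q+3) by unfold inA; omega)],
      show fcel k (5*q+4) 2 (5*q+3) = 0 from by unfold fcel; rw [if_neg (show ¬ inA (5*q+4) 2 (5*q+3) by unfold inA; omega), if_neg (show ¬ inB (5*q+4) 2 (5*q+3) by unfold inB; omega)],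
      show fcel k (5*q+4) 3 (5*q+3) = 0 from by unfold fcel; rw [if_neg (show ¬ inA (5*q+4) 3 (5*q+3) by unfold inA; omega), if_neg (show ¬ inB (5*q+4) 3 (5*q+3) by unfold inB; omega)],
      show fcel k (5*q+4) 4 (5*q+3) = k+1 from by unfold fcel; rw [if_pos (show inA (5*q+4) 4 (5*q+3) by unfold inA; omega)],
      show fcel k (5*q+4) 5 (5*q+3) = 0 from by unfold fcel; rw [if_neg (show ¬ inA (5*q+4) 5 (5*q+3) by unfold inA; omega), if_neg (show ¬ inB (5*q+4) 5 (5*q+3) by unfold inB; omega)],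
      show fcel k (5*q+4) 6 (5*q+3) = k from by unfold fcel; rw [if_neg (show ¬ inA (5*q+4) 6 (5*q+3) by unfold inA; omega), if_pos (show inB (5*q+4) 6 (5*q+3) by unfold inB; omega)],
      show fcel k (5*q+4) 7 (5*q+3) = 0 from by unfold fcel; rw [if_neg (show ¬ inA (5*q+4) 7 (5*q+3) by unfold inA; omega), if_neg (show ¬ inB (5*q+4) 7 (5*q+3) by unfold inB; omega)]]
    unfold CL
    rw [if_neg (by omega), if_neg (by omega)]
    omega

lemma cyc_adj (a b : Fin 8) (h : (a.val+1)%8 = b.val ∨ (b.val+1)%8 = a.val) :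
    (SimpleGraph.cycleGraph 8).Adj a b := by
  fin_cases a <;> fin_cases b <;> revert h <;> decide

lemma path_adj {n : ℕ} (a b : Fin n) (h : a.val+1 = b.val ∨ b.val+1 = a.val) :
    (SimpleGraph.pathGraph n).Adj a b := by
  rw [SimpleGraph.pathGraph_adj]; exact h

lemma key {V : Type*} [Fintype V] {k : ℕ} (hk : 1 ≤ k) (G : SimpleGraph V) (f : V → ℕ)
    (hvals : ∀ u, f u = 0 ∨ k ≤ f u) {v u0 : V} (hadj : G.Adj v u0) (hu0 : f u0 = k + 1) :
    k + anCard G f v ≤ nbhdSum G f v := by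
  unfold anCard nbhdSum
  set S := Finset.univ.filter (fun u => G.Adj v u ∧ 0 < f u) with hS
  set T := Finset.univ.filter (fun u => G.Adj v u ∨ u = v) with hT
  have hu0S : u0 ∈ S := by
    rw [hS, Finset.mem_filter]
    exact ⟨Finset.mem_univ _, hadj, by omega⟩
  have hsub : S ⊆ T := by
    intro u hu
    rw [hS, Finset.mem_filter] at hu
    rw [hT, Finset.mem_filter]
    exact ⟨hu.1, Or.inl hu.2.1⟩
  have h1 : ∑ u ∈ S, f u ≤ ∑ u ∈ T, f u := Finset.sum_le_sum_of_subset hsub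
  have h2 : f u0 + ∑ u ∈ S.erase u0, f u = ∑ u ∈ S, f u := Finset.add_sum_erase S f hu0S
  have h3 : (S.erase u0).card * k ≤ ∑ u ∈ S.erase u0, f u := by
    have hle : ∀ x ∈ S.erase u0, k ≤ f x := by
      intro x hx
      have hxS := Finset.mem_of_mem_erase hx
      rw [hS, Finset.mem_filter] at hxS
      rcases hvals x with h | h
      · omega
      · exact h
    simpa [smul_eq_mul] using Finset.card_nsmul_le_sum (S.erase u0) f k hle
  have h4 : (S.erase u0).card = S.card - 1 := Finset.card_erase_of_mem hu0S
  have h5 : 1 ≤ S.card := Finset.card_pos.mpr ⟨u0, hu0S⟩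
  have hmul : S.card - 1 ≤ (S.card - 1) * k := le_mul_of_one_le_right (Nat.zero_le _) hk
  calc k + S.card = (k + 1) + (S.card - 1) := by omega
    _ ≤ (k + 1) + (S.card - 1) * k := Nat.add_le_add_left hmul _
    _ = f u0 + (S.erase u0).card * k := by rw [hu0, h4]
    _ ≤ f u0 + ∑ u ∈ S.erase u0, f u := Nat.add_le_add_left h3 _
    _ = ∑ u ∈ S, f u := h2
    _ ≤ ∑ u ∈ T, f u := h1

noncomputable def FF (k n : ℕ) : Fin 8 × Fin n → ℕ := fun v => fcel k n v.1.val v.2.val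

lemma FF_isKRDF (k n : ℕ) (hk : 1 ≤ k) (hn : 2 ≤ n) : IsKRDF k (cylinder 8 n) (FF k n) := by
  constructor
  · intro v; unfold FF fcel; split_ifs <;> omega
  · intro v hv
    have hvals : ∀ u : Fin 8 × Fin n, FF k n u = 0 ∨ k ≤ FF k n u := by
      intro u; unfold FF fcel; split_ifs <;> omega
    by_cases hA : inA n v.1.val v.2.val
    · exfalso; unfold FF fcel at hv; rw [if_pos hA] at hv; omega
    by_cases hB : inB n v.1.val v.2.val
    · exfalso; unfold FF fcel at hv; rw [if_neg hA, if_pos hB] at hv; omega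
    have hr : v.1.val < 8 := v.1.isLt
    have hj : v.2.val < n := v.2.isLt
    rcases dom n v.1.val v.2.val hn hr hj hA hB with h | h | ⟨hlt, h⟩ | ⟨hge, h⟩
    · refine key hk _ _ hvals
        (v := v) (u0 := (⟨(v.1.val+1)%8, Nat.mod_lt _ (by omega)⟩, v.2)) ?_ ?_
      · exact Or.inl ⟨cyc_adj _ _ (Or.inl rfl), rfl⟩
      · show fcel k n ((v.1.val+1)%8) v.2.val = k + 1
        unfold fcel; rw [if_pos h]
    · refine key hk _ _ hvals
        (v := v) (u0 := (⟨(v.1.val+7)%8, Nat.mod_lt _ (by omega)⟩, v.2)) ?_ ?_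
      · exact Or.inl ⟨cyc_adj _ _ (Or.inr (show ((v.1.val+7)%8+1)%8 = v.1.val by
          have := v.1.isLt; omega)), rfl⟩
      · show fcel k n ((v.1.val+7)%8) v.2.val = k + 1
        unfold fcel; rw [if_pos h]
    · refine key hk _ _ hvals (v := v) (u0 := (v.1, ⟨v.2.val+1, hlt⟩)) ?_ ?_
      · exact Or.inr ⟨path_adj _ _ (Or.inl rfl), rfl⟩
      · show fcel k n v.1.val (v.2.val+1) = k + 1
        unfold fcel; rw [if_pos h]
    · refine key hk _ _ hvals (v := v) (u0 := (v.1, ⟨v.2.val-1, by omega⟩)) ?_ ?_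
      · exact Or.inr ⟨path_adj _ _ (Or.inr (show (v.2.val-1)+1 = v.2.val by omega)), rfl⟩
      · show fcel k n v.1.val (v.2.val-1) = k + 1
        unfold fcel; rw [if_pos h]

lemma weight (k n : ℕ) : ∑ v : Fin 8 × Fin n, FF k n v = ∑ j ∈ Finset.range n, col k n j := by
  unfold FF
  rw [Fintype.sum_prod_type, Finset.sum_comm]
  rw [Fin.sum_univ_eq_sum_range (fun j => ∑ r : Fin 8, fcel k n (r : ℕ) j) n]
  refine Finset.sum_congr rfl (fun j hj => ?_)
  unfold col
  exact Fin.sum_univ_eq_sum_range (fun r => fcel k n r j) 8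

lemma sum_CI (k m : ℕ) :
    (∑ j ∈ Finset.range m, CI k j) + ((m+3)/5 + m/5) = (2*k+2)*m + (if 2 ≤ m then 1 else 0) := by
  induction m with
  | zero => simp
  | succ m ih =>
    rw [Finset.sum_range_succ]
    have hCI : CI k m = if 2 ≤ m ∧ (m % 5 = 1 ∨ m % 5 = 4) then 2*k+1 else 2*k+2 := rfl
    have hx : (2*k+2)*(m+1) = (2*k+2)*m + (2*k+2) := by ring
    rw [hx, hCI]
    generalize hT : (2*k+2)*m = T at ih ⊢
    generalize hS : ∑ j ∈ Finset.range m, CI k j = S at ih ⊢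
    split_ifs at ih ⊢ <;> omega

lemma total (k n : ℕ) (hn : 2 ≤ n) :
    ∑ j ∈ Finset.range n, col k n j ≤ 2*n*(k+1) - ((n-2)/5 + n/5) + 2*k := by
  obtain ⟨p, rfl⟩ : ∃ p, n = p + 2 := ⟨n - 2, by omega⟩
  rw [Finset.sum_range_succ]
  have hins : ∑ j ∈ Finset.range (p+1), col k (p+2) j = ∑ j ∈ Finset.range (p+1), CI k j := by
    refine Finset.sum_congr rfl (fun j hj => ?_)
    have := Finset.mem_range.mp hj
    exact col_interior k (p+2) j (by omega) (by omega)
  have hlast : col k (p+2) (p+1) = CL k (p+2) := by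
    have := col_last k (p+2) (by omega)
    rwa [show p+2-1 = p+1 by omega] at this
  rw [hins, hlast]
  have hsum := sum_CI k (p+1)
  have hx : 2*(p+2)*(k+1) = (2*k+2)*(p+1) + (2*k+2) := by ring
  rw [hx, show p+2-2 = p by omega]
  unfold CL
  generalize hT : (2*k+2)*(p+1) = T at hsum ⊢
  generalize hS : ∑ j ∈ Finset.range (p+1), CI k j = S at hsum ⊢
  split_ifs at hsum ⊢ <;> omega

theorem stmt17 (k n : ℕ) (hk : 1 ≤ k) (hn : 2 ≤ n) :
    gammaKR k (cylinder 8 n) ≤ 2 * n * (k + 1) - ((n - 2) / 5 + n / 5) + 2 * k := by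
  have h1 : gammaKR k (cylinder 8 n) ≤ ∑ v, FF k n v :=
    Nat.sInf_le ⟨FF k n, FF_isKRDF k n hk hn, rfl⟩
  calc gammaKR k (cylinder 8 n) ≤ ∑ v, FF k n v := h1
    _ = ∑ j ∈ Finset.range n, col k n j := weight k n
    _ ≤ _ := total k n hn
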